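/- Let (b1,...,br) be a sequence of positive integers which is not m-reducible. Then either r < m, or there exist indices k, ℓ with r − m + 1 ≤ k < ℓ ≤ r such that b_k ≤ b_ℓ and b_k < m. -/

import Mathlib

/-- One pass of the Reduction Algorithm with parameter `m`, acting on the last
`m` entries of the sequence, listed in reverse order (i.e. from `a_m` down to
`a_1`), with `Z` the set of still available reducers.  At each step the reducer
is `a` itself if `a < m` and `a ≤ max Z`, and otherwise `max Z`; the algorithm
fails (`none`) if the chosen reducer is no longer available. -/
def redAux (m : ℕ) : List ℕ → Finset ℕ → Option (List ℕ)
  | [], _ => some []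
  | a :: rest, Z =>
    let z := Z.max.getD 0
    let r := if a < m ∧ a ≤ z then a else z
    if r ∈ Z then
      (redAux m rest (Z.erase r)).map (fun cs => (a - r) :: cs)
    else
      none

/-- The Reduction Algorithm with parameter `m` applied to a sequence
`S = (b_1, …, b_k, a_1, …, a_m)`.  Returns `some` of the `m`-reduction
`(b_1, …, b_k, c_1, …, c_m)` if `S` is `m`-reducible, and `none` otherwise
(in particular if `S` is shorter than `m`). -/
def mReduction (m : ℕ) (S : List ℕ) : Option (List ℕ) :=
  if m ≤ S.length then
    (redAux m (S.drop (S.length - m)).reverse (Finset.Icc 1 m)).map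
      (fun cs => S.take (S.length - m) ++ cs.reverse)
  else
    none

/-!
Read the last `m` entries backwards, as the algorithm does, and call a pair of entries `a'` before
`a` bad if `a ≤ a'` and `a < m`. As long as as many reducers as entries remain, `max Z` is available,
so the algorithm can only fail by choosing an entry `a < m` as reducer which is no longer
available. With positive entries `a` lies in `Z_m = {1, …, m}`, so some earlier step
removed it: either that step's entry was `a` itself, or `a` was the maximum of the available set
then and the entry exceeded it or was at least `m`. Either way the two entries form a bad pair.
-/

def reducer (m a : ℕ) (Z : Finset ℕ) : ℕ :=
  if a < m ∧ a ≤ Z.max.getD 0 then a else Z.max.getD 0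

lemma redAux_cons (m a : ℕ) (rest : List ℕ) (Z : Finset ℕ) :
    redAux m (a :: rest) Z =
      if reducer m a Z ∈ Z then
        (redAux m rest (Z.erase (reducer m a Z))).map (fun cs => (a - reducer m a Z) :: cs)
      else none :=
  rfl

lemma max_getD_mem {Z : Finset ℕ} (hZ : Z.Nonempty) : Z.max.getD 0 ∈ Z := by
  rw [← Finset.coe_max' hZ]
  exact Z.max'_mem hZ

lemma reducer_eq_of_not_mem {m a : ℕ} {Z : Finset ℕ} (hZ : Z.Nonempty) (h : reducer m a Z ∉ Z) :
    a < m ∧ reducer m a Z = a := by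
  unfold reducer at h ⊢
  split_ifs at h ⊢ with ha
  · exact ⟨ha.1, rfl⟩
  · exact absurd (max_getD_mem hZ) h

lemma le_of_reducer_eq {m a a' : ℕ} {Z : Finset ℕ} (h : reducer m a' Z = a) (ha : a < m) :
    a ≤ a' := by
  unfold reducer at h
  split_ifs at h with ha' <;> omega

theorem not_pairwise_or_exists_of_redAux_eq_none (m : ℕ) :
    ∀ (L : List ℕ) (Z : Finset ℕ), redAux m L Z = none → L.length ≤ Z.card →
      ¬ L.Pairwise (fun x y => y < m → x < y) ∨ ∃ a ∈ L, a < m ∧ a ∉ Z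
  | [], _, h, _ => nomatch h
  | a' :: rest, Z, h, hcard => by
    have hZ : Z.Nonempty := Finset.card_pos.mp (by simp at hcard; omega)
    rw [redAux_cons] at h
    by_cases hr : reducer m a' Z ∈ Z
    · rw [if_pos hr, Option.map_eq_none_iff] at h
      have hcard' : rest.length ≤ (Z.erase (reducer m a' Z)).card := by
        rw [Finset.card_erase_of_mem hr]; simp at hcard; omega
      rcases not_pairwise_or_exists_of_redAux_eq_none m rest _ h hcard' with
        hrest | ⟨a, ha, ham, haZ⟩
      · exact Or.inl fun hL => hrest (List.pairwise_cons.mp hL).2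
      · by_cases har : a = reducer m a' Z
        · have hle : a ≤ a' := le_of_reducer_eq har.symm ham
          exact Or.inl fun hL => by
            have := (List.pairwise_cons.mp hL).1 a ha ham
            omega
        · exact Or.inr ⟨a, List.mem_cons_of_mem a' ha, ham, fun haZ' =>
            haZ (Finset.mem_erase.mpr ⟨har, haZ'⟩)⟩
    · obtain ⟨ham, hra⟩ := reducer_eq_of_not_mem hZ hr
      exact Or.inr ⟨a', List.mem_cons_self, ham, hra ▸ hr⟩

lemma not_pairwise_of_redAux_Icc_eq_none {m : ℕ} {L : List ℕ} (hL : L.length ≤ m)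
    (hpos : ∀ x ∈ L, 0 < x) (h : redAux m L (Finset.Icc 1 m) = none) :
    ¬ L.Pairwise (fun x y => y < m → x < y) := by
  rcases not_pairwise_or_exists_of_redAux_eq_none m L _ h (by simpa using hL) with
    hL | ⟨a, ha, ham, haZ⟩
  · exact hL
  · exact absurd (Finset.mem_Icc.mpr ⟨hpos a ha, ham.le⟩) haZ

lemma exists_lt_of_not_pairwise_drop {α : Type*} {R : α → α → Prop} {S : List α} {n : ℕ}
    (d : α) (h : ¬ (S.drop n).Pairwise R) :
    ∃ k ℓ : ℕ, n ≤ k ∧ k < ℓ ∧ ℓ < S.length ∧ ¬ R (S.getD k d) (S.getD ℓ d) := by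
  simp only [List.pairwise_iff_getElem, List.getElem_drop, not_forall] at h
  obtain ⟨i, j, hi, hj, hij, hR⟩ := h
  simp only [List.length_drop] at hi hj
  refine ⟨n + i, n + j, by omega, by omega, by omega, ?_⟩
  rwa [List.getD_eq_getElem _ _ (by omega), List.getD_eq_getElem _ _ (by omega)]

/-- Lemma 2.9 (lem:redfails): if a sequence `S = (b_1, …, b_r)` of positive
integers is not `m`-reducible, then either `r < m`, or (in 0-indexed form)
there are indices `k < ℓ < r` with `r − m ≤ k`, `b_k ≤ b_ℓ` and `b_k < m`. -/
theorem redfails (m : ℕ) (S : List ℕ)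
    (hpos : ∀ x ∈ S, 0 < x) (h : mReduction m S = none) :
    S.length < m ∨
      ∃ k ℓ : ℕ, S.length - m ≤ k ∧ k < ℓ ∧ ℓ < S.length ∧
        S.getD k 0 ≤ S.getD ℓ 0 ∧ S.getD k 0 < m := by
  by_cases hm : m ≤ S.length
  · right
    rw [mReduction, if_pos hm, Option.map_eq_none_iff] at h
    have hseg := not_pairwise_of_redAux_Icc_eq_none (by simp; omega)
      (fun x hx => hpos x (List.mem_of_mem_drop (List.mem_reverse.mp hx))) h
    rw [List.pairwise_reverse] at hseg
    obtain ⟨k, ℓ, hk, hkℓ, hℓ, hR⟩ := exists_lt_of_not_pairwise_drop 0 hseg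
    exact ⟨k, ℓ, hk, hkℓ, hℓ, by omega, by omega⟩
  · exact Or.inl (by omega)
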